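/- Let I ⊆ ℝ be a nondegenerate interval and let (F_n)_{n=1}^∞ be a sequence of twice continuously differentiable functions F_n : I → ℝ with nowhere vanishing first derivatives, such that the functions F_n''/F_n' are uniformly bounded below on I (there exists C ∈ ℝ with F_n''(x)/F_n'(x) ≥ C for all n and all x ∈ I). Then (F_n) is QA-maximal if and only if lim_{n→∞} ∫_x^y F_n''(t)/F_n'(t) dt = +∞ for all x, y ∈ I with x < y. -/
import Mathlib


open Set Filter Topology

/-- The quasiarithmetic mean generated by `F` on the interval `I`:
`A[F](a₁,…,a_k) = F⁻¹((F(a₁)+⋯+F(a_k))/k)`, where the inverse is taken on `I`. -/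
noncomputable def qaMean (I : Set ℝ) (F : ℝ → ℝ) {k : ℕ} (a : Fin k → ℝ) : ℝ :=
  Function.invFunOn F I ((∑ i, F (a i)) / k)

/-- A sequence of generators is QA-maximal if the associated quasiarithmetic means tend
pointwise to the maximum. -/
def IsQAMaximal (I : Set ℝ) (F : ℕ → ℝ → ℝ) : Prop :=
  ∀ (k : ℕ) (a : Fin (k + 1) → ℝ), (∀ i, a i ∈ I) →
    Tendsto (fun n => qaMean I (F n) a) atTop
      (𝓝 (Finset.univ.sup' Finset.univ_nonempty a))

namespace QA19

lemma ftc {I : Set ℝ} (hI : I.OrdConnected) {f' f'' : ℝ → ℝ}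
    (h2 : ∀ x ∈ I, HasDerivWithinAt f' (f'' x) I x)
    (h2c : ContinuousOn f'' I)
    (hne : ∀ x ∈ I, f' x ≠ 0)
    {x y : ℝ} (hx : x ∈ I) (hy : y ∈ I) (hxy : x ≤ y) :
    ∫ t in x..y, f'' t / f' t = Real.log (f' y) - Real.log (f' x) := by
  have hIcc : Icc x y ⊆ I := hI.out hx hy
  have hcf' : ContinuousOn f' I := fun t ht => (h2 t ht).continuousWithinAt
  apply intervalIntegral.integral_eq_sub_of_hasDeriv_right_of_le hxy
  · exact ((hcf'.mono hIcc).log (fun t ht => hne t (hIcc ht)))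
  · intro t ht
    have htI : t ∈ interior I := by
      have : Ioo x y ⊆ interior I :=
        interior_maximal (Set.Ioo_subset_Icc_self.trans hIcc) isOpen_Ioo
      exact this ht
    have hd : HasDerivAt f' (f'' t) t :=
      (h2 t (interior_subset htI)).hasDerivAt (mem_interior_iff_mem_nhds.mp htI)
    exact ((hd.log (hne t (interior_subset htI)))).hasDerivWithinAt
  · exact ((h2c.div hcf' hne).mono hIcc).intervalIntegrable_of_Icc hxy


/-- Exponential comparison of derivative values. -/
lemma expLB {I : Set ℝ} (hI : I.OrdConnected) {f' f'' : ℝ → ℝ}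
    (h2 : ∀ x ∈ I, HasDerivWithinAt f' (f'' x) I x)
    (h2c : ContinuousOn f'' I)
    (hpos : ∀ x ∈ I, 0 < f' x)
    {C : ℝ} (hC : ∀ x ∈ I, C ≤ f'' x / f' x)
    {u v : ℝ} (hu : u ∈ I) (hv : v ∈ I) (huv : u ≤ v) :
    f' u * Real.exp (C * (v - u)) ≤ f' v := by
  have hne : ∀ x ∈ I, f' x ≠ 0 := fun x hx => (hpos x hx).ne'
  have hIcc : Icc u v ⊆ I := hI.out hu hv
  have hcf' : ContinuousOn f' I := fun t ht => (h2 t ht).continuousWithinAt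
  have key : C * (v - u) ≤ Real.log (f' v) - Real.log (f' u) := by
    rw [← ftc hI h2 h2c hne hu hv huv]
    calc C * (v - u) = ∫ _ in u..v, C := by
          rw [intervalIntegral.integral_const, smul_eq_mul]; ring
      _ ≤ ∫ t in u..v, f'' t / f' t := by
          apply intervalIntegral.integral_mono_on huv intervalIntegrable_const
          · exact ((h2c.div hcf' hne).mono hIcc).intervalIntegrable_of_Icc huv
          · exact fun t ht => hC t (hIcc ht)
  have h1 : Real.log (f' u) + C * (v - u) ≤ Real.log (f' v) := by linarith
  calc f' u * Real.exp (C * (v - u))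
      = Real.exp (Real.log (f' u) + C * (v - u)) := by
        rw [Real.exp_add, Real.exp_log (hpos u hu)]
    _ ≤ Real.exp (Real.log (f' v)) := Real.exp_le_exp.mpr h1
    _ = f' v := Real.exp_log (hpos v hv)

lemma ftc0 {I : Set ℝ} (hI : I.OrdConnected) {f f' : ℝ → ℝ}
    (h1 : ∀ x ∈ I, HasDerivWithinAt f (f' x) I x)
    (hcf' : ContinuousOn f' I)
    {x y : ℝ} (hx : x ∈ I) (hy : y ∈ I) (hxy : x ≤ y) :
    ∫ t in x..y, f' t = f y - f x := by
  have hIcc : Icc x y ⊆ I := hI.out hx hy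
  apply intervalIntegral.integral_eq_sub_of_hasDeriv_right_of_le hxy
  · have hcf : ContinuousOn f I := fun t ht => (h1 t ht).continuousWithinAt
    exact hcf.mono hIcc
  · intro t ht
    have htI : t ∈ interior I := by
      have : Ioo x y ⊆ interior I :=
        interior_maximal (Set.Ioo_subset_Icc_self.trans hIcc) isOpen_Ioo
      exact this ht
    exact ((h1 t (interior_subset htI)).hasDerivAt
      (mem_interior_iff_mem_nhds.mp htI)).hasDerivWithinAt
  · exact (hcf'.mono hIcc).intervalIntegrable_of_Icc hxy


lemma LB {I : Set ℝ} (hI : I.OrdConnected) {f f' f'' : ℝ → ℝ}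
    (h1 : ∀ x ∈ I, HasDerivWithinAt f (f' x) I x)
    (h2 : ∀ x ∈ I, HasDerivWithinAt f' (f'' x) I x)
    (h2c : ContinuousOn f'' I)
    (hpos : ∀ x ∈ I, 0 < f' x)
    {C : ℝ} (hC : ∀ x ∈ I, C ≤ f'' x / f' x)
    {u v : ℝ} (hu : u ∈ I) (hv : v ∈ I) (huv : u ≤ v) :
    f' u * (min 1 (Real.exp (C * (v - u))) * (v - u)) ≤ f v - f u := by
  have hIcc : Icc u v ⊆ I := hI.out hu hv
  have hcf' : ContinuousOn f' I := fun t ht => (h2 t ht).continuousWithinAt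
  rw [← ftc0 hI h1 hcf' hu hv huv]
  calc f' u * (min 1 (Real.exp (C * (v - u))) * (v - u))
      = ∫ _ in u..v, f' u * min 1 (Real.exp (C * (v - u))) := by
        rw [intervalIntegral.integral_const, smul_eq_mul]; ring
    _ ≤ ∫ t in u..v, f' t := by
        apply intervalIntegral.integral_mono_on huv intervalIntegrable_const
          ((hcf'.mono hIcc).intervalIntegrable_of_Icc huv)
        intro t ht
        have htI : t ∈ I := hIcc ht
        have he : f' u * Real.exp (C * (t - u)) ≤ f' t :=
          expLB hI h2 h2c hpos hC hu htI ht.1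
        have hmin : min 1 (Real.exp (C * (v - u))) ≤ Real.exp (C * (t - u)) := by
          rcases le_total C 0 with hC0 | hC0
          · exact min_le_of_right_le (Real.exp_le_exp.mpr
              (by nlinarith [ht.2]))
          · exact min_le_of_left_le (by
              rw [← Real.exp_zero]
              exact Real.exp_le_exp.mpr (by nlinarith [ht.1]))
        nlinarith [hpos u hu, Real.exp_pos (C * (t - u))]

lemma UB {I : Set ℝ} (hI : I.OrdConnected) {f f' f'' : ℝ → ℝ}
    (h1 : ∀ x ∈ I, HasDerivWithinAt f (f' x) I x)
    (h2 : ∀ x ∈ I, HasDerivWithinAt f' (f'' x) I x)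
    (h2c : ContinuousOn f'' I)
    (hpos : ∀ x ∈ I, 0 < f' x)
    {C : ℝ} (hC : ∀ x ∈ I, C ≤ f'' x / f' x)
    {u v : ℝ} (hu : u ∈ I) (hv : v ∈ I) (huv : u ≤ v) :
    f v - f u ≤ f' v * (max 1 (Real.exp (C * (u - v))) * (v - u)) := by
  have hIcc : Icc u v ⊆ I := hI.out hu hv
  have hcf' : ContinuousOn f' I := fun t ht => (h2 t ht).continuousWithinAt
  rw [← ftc0 hI h1 hcf' hu hv huv]
  calc (∫ t in u..v, f' t)
      ≤ ∫ _ in u..v, f' v * max 1 (Real.exp (C * (u - v))) := by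
        apply intervalIntegral.integral_mono_on huv
          ((hcf'.mono hIcc).intervalIntegrable_of_Icc huv) intervalIntegrable_const
        intro t ht
        have htI : t ∈ I := hIcc ht
        have he : f' t * Real.exp (C * (v - t)) ≤ f' v :=
          expLB hI h2 h2c hpos hC htI hv ht.2
        have hmax : Real.exp (C * (t - v)) ≤ max 1 (Real.exp (C * (u - v))) := by
          rcases le_total C 0 with hC0 | hC0
          · exact le_max_of_le_right (Real.exp_le_exp.mpr (by nlinarith [ht.1]))
          · exact le_max_of_le_left (by
              rw [← Real.exp_zero]
              exact Real.exp_le_exp.mpr (by nlinarith [ht.2]))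
        have hft : f' t ≤ f' v * Real.exp (C * (t - v)) := by
          have h0 : Real.exp (C * (v - t)) * Real.exp (C * (t - v)) = 1 := by
            rw [← Real.exp_add]; ring_nf; exact Real.exp_zero
          nlinarith [Real.exp_pos (C * (t - v)), Real.exp_pos (C * (v - t)), hpos t htI]
        nlinarith [hpos v hv, Real.exp_pos (C * (t - v))]
    _ = f' v * (max 1 (Real.exp (C * (u - v))) * (v - u)) := by
        rw [intervalIntegral.integral_const, smul_eq_mul]; ring

lemma strictMonoF {I : Set ℝ} (hI : I.OrdConnected) {f f' f'' : ℝ → ℝ}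
    (h1 : ∀ x ∈ I, HasDerivWithinAt f (f' x) I x)
    (h2 : ∀ x ∈ I, HasDerivWithinAt f' (f'' x) I x)
    (h2c : ContinuousOn f'' I)
    (hpos : ∀ x ∈ I, 0 < f' x)
    {C : ℝ} (hC : ∀ x ∈ I, C ≤ f'' x / f' x) :
    StrictMonoOn f I := by
  intro u hu v hv huv
  have := LB hI h1 h2 h2c hpos hC hu hv huv.le
  have h0 : 0 < f' u * (min 1 (Real.exp (C * (v - u))) * (v - u)) := by
    have := hpos u hu
    have := Real.exp_pos (C * (v - u))
    have hm : 0 < min 1 (Real.exp (C * (v - u))) := lt_min one_pos (by linarith)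
    have hvu : 0 < v - u := sub_pos.mpr huv
    positivity
  linarith


lemma mean_spec {I : Set ℝ} (hI : I.OrdConnected) {f : ℝ → ℝ}
    (hmono : StrictMonoOn f I) (hcont : ContinuousOn f I)
    {k : ℕ} (a : Fin (k + 1) → ℝ) (ha : ∀ i, a i ∈ I) :
    qaMean I f a ∈ I ∧ f (qaMean I f a) = (∑ i, f (a i)) / ((k + 1 : ℕ) : ℝ) ∧
    Finset.univ.inf' Finset.univ_nonempty a ≤ qaMean I f a ∧
    qaMean I f a ≤ Finset.univ.sup' Finset.univ_nonempty a := by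
  set μ : ℝ := (∑ i, f (a i)) / ((k + 1 : ℕ) : ℝ) with hμ
  obtain ⟨ip, -, hip⟩ := Finset.exists_mem_eq_inf' (Finset.univ_nonempty) a
  obtain ⟨iq, -, hiq⟩ := Finset.exists_mem_eq_sup' (Finset.univ_nonempty) a
  set p := Finset.univ.inf' Finset.univ_nonempty a with hp'
  set q := Finset.univ.sup' Finset.univ_nonempty a with hq'
  have hpI : p ∈ I := hip ▸ ha ip
  have hqI : q ∈ I := hiq ▸ ha iq
  have hpq : p ≤ q := by
    rw [hip, hq']; exact Finset.le_sup' a (Finset.mem_univ ip)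
  have hcard : ((k + 1 : ℕ) : ℝ) > 0 := by positivity
  have hfp : f p ≤ μ := by
    rw [hμ, le_div_iff₀ hcard]
    calc f p * ((k+1:ℕ):ℝ) = ∑ _i : Fin (k+1), f p := by
          rw [Finset.sum_const, Finset.card_univ, Fintype.card_fin, nsmul_eq_mul]; ring
      _ ≤ ∑ i, f (a i) := Finset.sum_le_sum (fun i _ =>
          hmono.monotoneOn hpI (ha i) (hp' ▸ Finset.inf'_le a (Finset.mem_univ i)))
  have hfq : μ ≤ f q := by
    rw [hμ, div_le_iff₀ hcard]
    calc ∑ i, f (a i) ≤ ∑ _i : Fin (k+1), f q := Finset.sum_le_sum (fun i _ =>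
          hmono.monotoneOn (ha i) hqI (hq' ▸ Finset.le_sup' a (Finset.mem_univ i)))
      _ = f q * ((k+1:ℕ):ℝ) := by
          rw [Finset.sum_const, Finset.card_univ, Fintype.card_fin, nsmul_eq_mul]; ring
  have hex : ∃ x ∈ I, f x = μ := by
    obtain ⟨m, hm, hfm⟩ := intermediate_value_Icc hpq (hcont.mono (hI.out hpI hqI)) ⟨hfp, hfq⟩
    exact ⟨m, hI.out hpI hqI hm, hfm⟩
  have hqa : qaMean I f a = Function.invFunOn f I μ := rfl
  have h1 : qaMean I f a ∈ I := hqa ▸ Function.invFunOn_mem hex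
  have h2 : f (qaMean I f a) = μ := by rw [hqa]; exact Function.invFunOn_eq hex
  refine ⟨h1, h2, ?_, ?_⟩
  · rw [← hmono.le_iff_le hpI h1]; rw [h2]; exact hfp
  · rw [← hmono.le_iff_le h1 hqI]; rw [h2]; exact hfq

lemma qaMean_neg {I : Set ℝ} {f : ℝ → ℝ} (hinj : InjOn f I)
    {k : ℕ} (a : Fin (k + 1) → ℝ)
    (hex : ∃ x ∈ I, f x = (∑ i, f (a i)) / ((k + 1 : ℕ) : ℝ)) :
    qaMean I (fun t => -f t) a = qaMean I f a := by
  set μ : ℝ := (∑ i, f (a i)) / ((k + 1 : ℕ) : ℝ) with hμ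
  obtain ⟨m₀, hm₀, hfm₀⟩ := hex
  have hex' : ∃ x ∈ I, f x = μ := ⟨m₀, hm₀, hfm₀⟩
  have hm : qaMean I f a ∈ I := Function.invFunOn_mem hex'
  have hfm : f (qaMean I f a) = μ := Function.invFunOn_eq hex'
  have hν : (∑ i, (fun t => -f t) (a i)) / ((k + 1 : ℕ) : ℝ) = -μ := by
    rw [hμ]; simp [Finset.sum_neg_distrib, neg_div]
  have hexn : ∃ x ∈ I, (fun t => -f t) x = (∑ i, (fun t => -f t) (a i)) / ((k + 1 : ℕ) : ℝ) := by
    refine ⟨qaMean I f a, hm, ?_⟩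
    simp only [hν, hfm, neg_inj]
  have hm' : qaMean I (fun t => -f t) a ∈ I := Function.invFunOn_mem hexn
  have hfm' : (fun t => -f t) (qaMean I (fun t => -f t) a)
      = (∑ i, (fun t => -f t) (a i)) / ((k + 1 : ℕ) : ℝ) := Function.invFunOn_eq hexn
  apply hinj hm' hm
  have : -f (qaMean I (fun t => -f t) a) = -μ := by rw [← hν]; exact hfm'
  rw [hfm]; linarith

lemma sign_dichotomy {I : Set ℝ} (hI : I.OrdConnected) {f' : ℝ → ℝ}
    (hcf' : ContinuousOn f' I) (hne : ∀ x ∈ I, f' x ≠ 0) :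
    (∀ x ∈ I, 0 < f' x) ∨ (∀ x ∈ I, f' x < 0) := by
  by_contra h
  push_neg at h
  obtain ⟨⟨u, hu, hu0⟩, ⟨v, hv, hv0⟩⟩ := h
  have hu0' : f' u < 0 := lt_of_le_of_ne hu0 (hne u hu)
  have hv0' : 0 < f' v := lt_of_le_of_ne hv0 (Ne.symm (hne v hv))
  have hsub : uIcc u v ⊆ I := hI.uIcc_subset hu hv
  have h0 : (0 : ℝ) ∈ uIcc (f' u) (f' v) := by
    rw [Set.mem_uIcc]; left; exact ⟨hu0'.le, hv0'.le⟩
  obtain ⟨t, ht, hft⟩ := intermediate_value_uIcc (hcf'.mono hsub) h0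
  exact hne t (hsub ht) hft

lemma qa_of_R {I : Set ℝ} (hI : I.OrdConnected) (g : ℕ → ℝ → ℝ)
    (hmono : ∀ n, StrictMonoOn (g n) I) (hcont : ∀ n, ContinuousOn (g n) I)
    (hR : ∀ x ∈ I, ∀ y ∈ I, ∀ z ∈ I, x < y → y < z →
      Tendsto (fun n => (g n z - g n y) / (g n y - g n x)) atTop atTop) :
    IsQAMaximal I g := by
  intro k a ha
  obtain ⟨ip, -, hip⟩ := Finset.exists_mem_eq_inf' (Finset.univ_nonempty) a
  obtain ⟨iq, -, hiq⟩ := Finset.exists_mem_eq_sup' (Finset.univ_nonempty) a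
  set P := Finset.univ.inf' Finset.univ_nonempty a with hP
  set M := Finset.univ.sup' Finset.univ_nonempty a with hM
  have hPI : P ∈ I := hip ▸ ha ip
  have hMI : M ∈ I := hiq ▸ ha iq
  have hPM : P ≤ M := by rw [hip, hM]; exact Finset.le_sup' a (Finset.mem_univ ip)
  have spec := fun n => mean_spec hI (hmono n) (hcont n) a ha
  rcases eq_or_lt_of_le hPM with hPM' | hPM'
  · -- all points equal M, mean is constant M
    have haM : ∀ i, a i = M := by
      intro i
      have h1 : P ≤ a i := hP ▸ Finset.inf'_le a (Finset.mem_univ i)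
      have h2 : a i ≤ M := hM ▸ Finset.le_sup' a (Finset.mem_univ i)
      linarith [hPM' ▸ h1]
    have : ∀ n, qaMean I (g n) a = M := by
      intro n
      obtain ⟨hmem, hval, -, -⟩ := spec n
      apply (hmono n).injOn hmem hMI
      rw [hval]
      have : ∀ i, g n (a i) = g n M := fun i => by rw [haM i]
      rw [Finset.sum_congr rfl (fun i _ => this i)]
      rw [Finset.sum_const, Finset.card_univ, Fintype.card_fin, nsmul_eq_mul]
      field_simp
    simp only [this]
    exact tendsto_const_nhds
  · rw [Metric.tendsto_atTop]
    intro ε hε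
    set y := (max P (M - ε) + M) / 2 with hy
    have hmaxlt : max P (M - ε) < M := max_lt hPM' (by linarith)
    have hylt : y < M := by rw [hy]; linarith [hmaxlt]
    have hygt : max P (M - ε) < y := by rw [hy]; linarith [hmaxlt]
    have hPy : P < y := lt_of_le_of_lt (le_max_left _ _) hygt
    have hyε : M - ε < y := lt_of_le_of_lt (le_max_right _ _) hygt
    have hyI : y ∈ I := hI.out hPI hMI ⟨hPy.le, hylt.le⟩
    have hRt := hR P hPI y hyI M hMI hPy hylt
    have hev : ∀ᶠ n in atTop, (k : ℝ) ≤ (g n M - g n y) / (g n y - g n P) :=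
      hRt.eventually_ge_atTop k
    rw [eventually_atTop] at hev
    obtain ⟨N, hN⟩ := hev
    refine ⟨N, fun n hn => ?_⟩
    obtain ⟨hmem, hval, hlow, hhigh⟩ := spec n
    have hden : 0 < g n y - g n P := sub_pos.mpr (hmono n hPI hyI hPy)
    have hkey : (k : ℝ) * (g n y - g n P) ≤ g n M - g n y := by
      have := hN n hn
      rw [le_div_iff₀ hden] at this
      linarith
    -- sum bound : ∑ g n (a i) ≥ g n M + k * g n P
    have hsum : g n M + (k : ℝ) * g n P ≤ ∑ i, g n (a i) := by
      have hsplit : g n (a iq) + ∑ i ∈ Finset.univ.erase iq, g n (a i) = ∑ i, g n (a i) :=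
        Finset.add_sum_erase Finset.univ (fun i => g n (a i)) (Finset.mem_univ iq)
      have hbound : ∀ i ∈ Finset.univ.erase iq, g n P ≤ g n (a i) := fun i _ =>
        (hmono n).monotoneOn hPI (ha i) (hP ▸ Finset.inf'_le a (Finset.mem_univ i))
      have hsum2 : (k : ℝ) * g n P ≤ ∑ i ∈ Finset.univ.erase iq, g n (a i) := by
        have := Finset.sum_le_sum hbound
        rwa [Finset.sum_const, Finset.card_erase_of_mem (Finset.mem_univ iq),
          Finset.card_univ, Fintype.card_fin, Nat.add_sub_cancel, nsmul_eq_mul] at this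
      rw [← hsplit, ← hiq]
      linarith
    have hmean_ge : g n y ≤ g n (qaMean I (g n) a) := by
      rw [hval, le_div_iff₀ (by positivity : (0:ℝ) < ((k+1:ℕ):ℝ))]
      push_cast
      linarith
    have hy_le : y ≤ qaMean I (g n) a := by
      rw [← (hmono n).le_iff_le hyI hmem]; exact hmean_ge
    rw [Real.dist_eq, abs_of_nonpos (by linarith : qaMean I (g n) a - M ≤ 0)]
    linarith


lemma R_of_qa {I : Set ℝ} (hI : I.OrdConnected) (g : ℕ → ℝ → ℝ)
    (hmono : ∀ n, StrictMonoOn (g n) I) (hcont : ∀ n, ContinuousOn (g n) I)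
    (hq : IsQAMaximal I g) :
    ∀ x ∈ I, ∀ y ∈ I, ∀ z ∈ I, x < y → y < z →
      Tendsto (fun n => (g n z - g n y) / (g n y - g n x)) atTop atTop := by
  intro x hx y hy z hz hxy hyz
  rw [tendsto_atTop]
  intro b
  obtain ⟨k, hk⟩ := exists_nat_ge b
  set a : Fin (k + 1) → ℝ := fun i => if i = 0 then z else x with ha'
  have ha : ∀ i, a i ∈ I := by
    intro i; rw [ha']; dsimp only; split <;> assumption
  have hxz : x < z := hxy.trans hyz
  have hsup : Finset.univ.sup' Finset.univ_nonempty a = z := by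
    apply le_antisymm
    · apply Finset.sup'_le
      intro i _
      rw [ha']; dsimp only; split
      · exact le_rfl
      · exact hxz.le
    · have h0 : a 0 = z := by rw [ha']; simp
      exact h0 ▸ Finset.le_sup' a (Finset.mem_univ 0)
  have htend := hq k a ha
  rw [hsup] at htend
  have hev : ∀ᶠ n in atTop, qaMean I (g n) a ∈ Ioi y := htend.eventually (Ioi_mem_nhds hyz)
  have spec := fun n => mean_spec hI (hmono n) (hcont n) a ha
  filter_upwards [hev] with n hn
  obtain ⟨hmem, hval, -, -⟩ := spec n
  have hsum : ∑ i, g n (a i) = g n z + (k : ℝ) * g n x := by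
    rw [Fin.sum_univ_succ]
    have h0 : a 0 = z := by rw [ha']; simp
    have hs : ∀ i : Fin k, a i.succ = x := by
      intro i; rw [ha']; dsimp only; rw [if_neg (Fin.succ_ne_zero i)]
    rw [h0]
    congr 1
    rw [Finset.sum_congr rfl (fun i _ => by rw [hs i])]
    rw [Finset.sum_const, Finset.card_univ, Fintype.card_fin, nsmul_eq_mul]
  have hgy : g n y < g n (qaMean I (g n) a) := hmono n hy hmem hn
  rw [hval, hsum] at hgy
  have hden : 0 < g n y - g n x := sub_pos.mpr (hmono n hx hy hxy)
  rw [le_div_iff₀ hden]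
  have h1 : ((k + 1 : ℕ) : ℝ) * g n y < g n z + (k : ℝ) * g n x := by
    rw [lt_div_iff₀ (by positivity : (0:ℝ) < ((k+1:ℕ):ℝ))] at hgy
    linarith
  push_cast at h1
  nlinarith [hk]


section seq
variable {I : Set ℝ} (hI : I.OrdConnected) {g g' g'' : ℕ → ℝ → ℝ}
  (h1 : ∀ n, ∀ x ∈ I, HasDerivWithinAt (g n) (g' n x) I x)
  (h2 : ∀ n, ∀ x ∈ I, HasDerivWithinAt (g' n) (g'' n x) I x)
  (h2c : ∀ n, ContinuousOn (g'' n) I)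
  (hpos : ∀ n, ∀ x ∈ I, 0 < g' n x)
  {C : ℝ} (hC : ∀ n, ∀ x ∈ I, C ≤ g'' n x / g' n x)

include hI h1 h2 h2c hpos hC in
lemma int_of_R
    (hR : ∀ x ∈ I, ∀ y ∈ I, ∀ z ∈ I, x < y → y < z →
      Tendsto (fun n => (g n z - g n y) / (g n y - g n x)) atTop atTop) :
    ∀ x ∈ I, ∀ y ∈ I, x < y →
      Tendsto (fun n => ∫ t in x..y, g'' n t / g' n t) atTop atTop := by
  intro x hx y hy hxy
  have hne : ∀ n, ∀ t ∈ I, g' n t ≠ 0 := fun n t ht => (hpos n t ht).ne'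
  -- rewrite the integral as log of the derivative ratio
  have hint : ∀ n, (∫ t in x..y, g'' n t / g' n t) = Real.log (g' n y / g' n x) := by
    intro n
    rw [ftc hI (h2 n) (h2c n) (hne n) hx hy hxy.le,
      Real.log_div (hne n y hy) (hne n x hx)]
  rw [tendsto_congr hint]
  have hratio : Tendsto (fun n => g' n y / g' n x) atTop atTop := by
    set u := x + (y - x) / 3 with hu
    set v := x + 2 * (y - x) / 3 with hv
    have hxu : x < u := by rw [hu]; linarith
    have huv : u < v := by rw [hu, hv]; linarith
    have hvy : v < y := by rw [hv]; linarith
    have huI : u ∈ I := hI.out hx hy ⟨hxu.le, (huv.trans hvy).le⟩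
    have hvI : v ∈ I := hI.out hx hy ⟨(hxu.trans huv).le, hvy.le⟩
    set K₁ : ℝ := max 1 (Real.exp (C * (v - y))) * (y - v) with hK₁
    set K₂ : ℝ := min 1 (Real.exp (C * (v - u))) * (v - u) with hK₂
    have hK₁pos : 0 < K₁ := by
      rw [hK₁]
      have := Real.exp_pos (C * (v - y))
      have h1' : (0:ℝ) < max 1 (Real.exp (C * (v - y))) := lt_max_of_lt_left one_pos
      nlinarith
    have hK₂pos : 0 < K₂ := by
      rw [hK₂]
      have := Real.exp_pos (C * (v - u))
      have h1' : (0:ℝ) < min 1 (Real.exp (C * (v - u))) := lt_min one_pos (by linarith)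
      nlinarith
    set c : ℝ := K₂ * Real.exp (C * (u - x)) / K₁ with hc
    have hcpos : 0 < c := by
      rw [hc]; have := Real.exp_pos (C * (u - x)); positivity
    have hbig : ∀ n, c * ((g n y - g n v) / (g n v - g n u)) ≤ g' n y / g' n x := by
      intro n
      have hA : g n y - g n v ≤ g' n y * K₁ := UB hI (h1 n) (h2 n) (h2c n) (hpos n) (hC n) hvI hy hvy.le
      have hB : g' n u * K₂ ≤ g n v - g n u := LB hI (h1 n) (h2 n) (h2c n) (hpos n) (hC n) huI hvI huv.le
      have hE : g' n x * Real.exp (C * (u - x)) ≤ g' n u := expLB hI (h2 n) (h2c n) (hpos n) (hC n) hx huI hxu.le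
      have hPx : 0 < g' n x := hpos n x hx
      have hPy : 0 < g' n y := hpos n y hy
      have hPu : 0 < g' n u := hpos n u huI
      have hBpos : 0 < g n v - g n u := lt_of_lt_of_le (by positivity) hB
      have hApos : 0 < g n y - g n v := by
        have hLB := LB hI (h1 n) (h2 n) (h2c n) (hpos n) (hC n) hvI hy hvy.le
        have hPv : 0 < g' n v := hpos n v hvI
        refine lt_of_lt_of_le ?_ hLB
        have h3 : (0:ℝ) < min 1 (Real.exp (C * (y - v))) :=
          lt_min one_pos (Real.exp_pos _)
        have h4 : (0:ℝ) < y - v := sub_pos.mpr hvy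
        exact mul_pos hPv (mul_pos h3 h4)
      have hEpos : 0 < Real.exp (C * (u - x)) := Real.exp_pos _
      rw [mul_div_assoc', div_le_div_iff₀ hBpos hPx, hc, div_mul_eq_mul_div,
        div_mul_eq_mul_div, div_le_iff₀ hK₁pos]
      set A := g n y - g n v
      set B := g n v - g n u
      have e2 : (K₂ * A) * (g' n x * Real.exp (C * (u - x))) ≤ (K₂ * A) * g' n u :=
        mul_le_mul_of_nonneg_left hE (by positivity)
      have e4 : (g' n u * K₂) * A ≤ B * A := mul_le_mul_of_nonneg_right hB hApos.le
      have e5 : B * A ≤ B * (g' n y * K₁) := mul_le_mul_of_nonneg_left hA hBpos.le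
      nlinarith [e2, e4, e5]
    exact tendsto_atTop_mono hbig ((hR u huI v hvI y hy huv hvy).const_mul_atTop hcpos)
  exact Real.tendsto_log_atTop.comp hratio


include hI h1 h2 h2c hpos hC in
lemma R_of_int
    (hInt : ∀ x ∈ I, ∀ y ∈ I, x < y →
      Tendsto (fun n => ∫ t in x..y, g'' n t / g' n t) atTop atTop) :
    ∀ x ∈ I, ∀ y ∈ I, ∀ z ∈ I, x < y → y < z →
      Tendsto (fun n => (g n z - g n y) / (g n y - g n x)) atTop atTop := by
  intro x hx y hy z hz hxy hyz
  have hne : ∀ n, ∀ t ∈ I, g' n t ≠ 0 := fun n t ht => (hpos n t ht).ne'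
  set w := (y + z) / 2 with hw
  have hyw : y < w := by rw [hw]; linarith
  have hwz : w < z := by rw [hw]; linarith
  have hwI : w ∈ I := hI.out hy hz ⟨hyw.le, hwz.le⟩
  -- the derivative ratio tends to infinity
  have hratio : Tendsto (fun n => g' n w / g' n y) atTop atTop := by
    have heq : ∀ n, Real.exp (∫ t in y..w, g'' n t / g' n t) = g' n w / g' n y := by
      intro n
      rw [ftc hI (h2 n) (h2c n) (hne n) hy hwI hyw.le, Real.exp_sub,
        Real.exp_log (hpos n w hwI), Real.exp_log (hpos n y hy)]
    rw [← tendsto_congr heq]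
    exact Real.tendsto_exp_atTop.comp (hInt y hy w hwI hyw)
  set K₃ : ℝ := min 1 (Real.exp (C * (z - w))) * (z - w) with hK₃
  set K₄ : ℝ := max 1 (Real.exp (C * (x - y))) * (y - x) with hK₄
  have hK₃pos : 0 < K₃ := by
    rw [hK₃]
    have h3 : (0:ℝ) < min 1 (Real.exp (C * (z - w))) := lt_min one_pos (Real.exp_pos _)
    have h4 : (0:ℝ) < z - w := sub_pos.mpr hwz
    exact mul_pos h3 h4
  have hK₄pos : 0 < K₄ := by
    rw [hK₄]
    have h3 : (0:ℝ) < max 1 (Real.exp (C * (x - y))) := lt_max_of_lt_left one_pos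
    have h4 : (0:ℝ) < y - x := sub_pos.mpr hxy
    exact mul_pos h3 h4
  have hcpos : 0 < K₃ / K₄ := by positivity
  apply tendsto_atTop_mono _ (hratio.const_mul_atTop hcpos)
  intro n
  have hLB : g' n w * K₃ ≤ g n z - g n w :=
    LB hI (h1 n) (h2 n) (h2c n) (hpos n) (hC n) hwI hz hwz.le
  have hUB : g n y - g n x ≤ g' n y * K₄ :=
    UB hI (h1 n) (h2 n) (h2c n) (hpos n) (hC n) hx hy hxy.le
  have hmono : g n y ≤ g n w := by
    have := LB hI (h1 n) (h2 n) (h2c n) (hpos n) (hC n) hy hwI hyw.le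
    have hPy : 0 < g' n y := hpos n y hy
    have h3 : (0:ℝ) < min 1 (Real.exp (C * (w - y))) := lt_min one_pos (Real.exp_pos _)
    have h4 : (0:ℝ) < w - y := sub_pos.mpr hyw
    nlinarith [mul_pos hPy (mul_pos h3 h4)]
  have hDpos : 0 < g n y - g n x := by
    have hLB2 := LB hI (h1 n) (h2 n) (h2c n) (hpos n) (hC n) hx hy hxy.le
    have hPx : 0 < g' n x := hpos n x hx
    have h3 : (0:ℝ) < min 1 (Real.exp (C * (y - x))) := lt_min one_pos (Real.exp_pos _)
    have h4 : (0:ℝ) < y - x := sub_pos.mpr hxy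
    nlinarith [mul_pos hPx (mul_pos h3 h4)]
  have hPw : 0 < g' n w := hpos n w hwI
  have hPy : 0 < g' n y := hpos n y hy
  -- goal : K₃/K₄ * (g' n w / g' n y) ≤ (g n z - g n y)/(g n y - g n x)
  rw [div_mul_div_comm, div_le_div_iff₀ (by positivity) hDpos]
  have e1 : K₃ * g' n w * (g n y - g n x) ≤ K₃ * g' n w * (g' n y * K₄) :=
    mul_le_mul_of_nonneg_left hUB (by positivity)
  have e2 : (g' n w * K₃) * (g' n y * K₄) ≤ (g n z - g n w) * (g' n y * K₄) :=
    mul_le_mul_of_nonneg_right hLB (by positivity)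
  have e3 : (g n z - g n w) * (g' n y * K₄) ≤ (g n z - g n y) * (g' n y * K₄) := by
    apply mul_le_mul_of_nonneg_right _ (by positivity)
    linarith
  nlinarith [e1, e2, e3]


include hI h1 h2 h2c hpos hC in
lemma main_pos (hmono : ∀ n, StrictMonoOn (g n) I) (hcont : ∀ n, ContinuousOn (g n) I) :
    IsQAMaximal I g ↔
    (∀ x ∈ I, ∀ y ∈ I, x < y →
      Tendsto (fun n => ∫ t in x..y, g'' n t / g' n t) atTop atTop) := by
  constructor
  · intro h
    exact int_of_R hI h1 h2 h2c hpos hC (R_of_qa hI g hmono hcont h)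
  · intro h
    exact qa_of_R hI g hmono hcont (R_of_int hI h1 h2 h2c hpos hC h)

end seq

end QA19

/-- For a sequence `(F_n)` of twice continuously differentiable generators with nowhere
vanishing first derivatives, such that `F_n''/F_n'` is uniformly bounded below on `I`,
QA-maximality is equivalent to `∫_x^y F_n''/F_n' → +∞` for all `x < y` in `I`. -/
theorem stmt_19 (I : Set ℝ) (hI : I.OrdConnected) (hInt : I.Nontrivial)
    (F F' F'' : ℕ → ℝ → ℝ)
    (hF1 : ∀ n, ∀ x ∈ I, HasDerivWithinAt (F n) (F' n x) I x)
    (hF2 : ∀ n, ∀ x ∈ I, HasDerivWithinAt (F' n) (F'' n x) I x)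
    (hF2c : ∀ n, ContinuousOn (F'' n) I)
    (hF'ne : ∀ n, ∀ x ∈ I, F' n x ≠ 0)
    (C : ℝ) (hC : ∀ n, ∀ x ∈ I, C ≤ F'' n x / F' n x) :
    IsQAMaximal I F ↔
    (∀ x ∈ I, ∀ y ∈ I, x < y →
      Tendsto (fun n => ∫ t in x..y, F'' n t / F' n t) atTop atTop) := by
  classical
  set Pos : ℕ → Prop := fun n => ∀ x ∈ I, 0 < F' n x with hPos
  set G : ℕ → ℝ → ℝ := fun n => if Pos n then F n else fun t => -F n t with hG
  set G' : ℕ → ℝ → ℝ := fun n => if Pos n then F' n else fun t => -F' n t with hG'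
  set G'' : ℕ → ℝ → ℝ := fun n => if Pos n then F'' n else fun t => -F'' n t with hG''
  have hneg : ∀ n, ¬ Pos n → ∀ x ∈ I, F' n x < 0 := fun n hn =>
    (QA19.sign_dichotomy hI (fun t ht => (hF2 n t ht).continuousWithinAt) (hF'ne n)).resolve_left hn
  have hG1 : ∀ n, ∀ x ∈ I, HasDerivWithinAt (G n) (G' n x) I x := by
    intro n x hx
    by_cases h : Pos n
    · simp only [hG, hG', if_pos h]; exact hF1 n x hx
    · simp only [hG, hG', if_neg h]; exact (hF1 n x hx).neg
  have hG2 : ∀ n, ∀ x ∈ I, HasDerivWithinAt (G' n) (G'' n x) I x := by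
    intro n x hx
    by_cases h : Pos n
    · simp only [hG', hG'', if_pos h]; exact hF2 n x hx
    · simp only [hG', hG'', if_neg h]; exact (hF2 n x hx).neg
  have hG2c : ∀ n, ContinuousOn (G'' n) I := by
    intro n
    by_cases h : Pos n
    · simp only [hG'', if_pos h]; exact hF2c n
    · simp only [hG'', if_neg h]; exact (hF2c n).neg
  have hGpos : ∀ n, ∀ x ∈ I, 0 < G' n x := by
    intro n x hx
    by_cases h : Pos n
    · simp only [hG', if_pos h]; exact h x hx
    · simp only [hG', if_neg h]
      exact neg_pos.mpr (hneg n h x hx)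
  have hGC : ∀ n, ∀ x ∈ I, C ≤ G'' n x / G' n x := by
    intro n x hx
    by_cases h : Pos n
    · simp only [hG', hG'', if_pos h]; exact hC n x hx
    · simp only [hG', hG'', if_neg h]
      rw [neg_div_neg_eq]
      exact hC n x hx
  have hGmono : ∀ n, StrictMonoOn (G n) I := fun n =>
    QA19.strictMonoF hI (hG1 n) (hG2 n) (hG2c n) (hGpos n) (hGC n)
  have hGcont : ∀ n, ContinuousOn (G n) I := fun n t ht => ((hG1 n) t ht).continuousWithinAt
  have key := QA19.main_pos hI hG1 hG2 hG2c hGpos hGC hGmono hGcont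
  -- the qaMeans of F and G agree
  have hmeanEq : ∀ n (k : ℕ) (a : Fin (k + 1) → ℝ), (∀ i, a i ∈ I) →
      qaMean I (F n) a = qaMean I (G n) a := by
    intro n k a ha
    by_cases h : Pos n
    · simp only [hG, if_pos h]
    · obtain ⟨hmem, hval, -, -⟩ := QA19.mean_spec hI (hGmono n) (hGcont n) a ha
      have hFg : F n = fun t => -(G n t) := by
        funext t; simp [hG, if_neg h]
      rw [hFg]
      exact QA19.qaMean_neg ((hGmono n).injOn) a ⟨_, hmem, hval⟩
  have hmax_iff : IsQAMaximal I F ↔ IsQAMaximal I G := by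
    constructor
    · intro h k a ha
      have heq : (fun n => qaMean I (G n) a) = (fun n => qaMean I (F n) a) :=
        funext (fun n => (hmeanEq n k a ha).symm)
      rw [heq]; exact h k a ha
    · intro h k a ha
      have heq : (fun n => qaMean I (F n) a) = (fun n => qaMean I (G n) a) :=
        funext (fun n => hmeanEq n k a ha)
      rw [heq]; exact h k a ha
  have hintEq : ∀ n (x y : ℝ), x ∈ I → y ∈ I →
      (∫ t in x..y, G'' n t / G' n t) = ∫ t in x..y, F'' n t / F' n t := by
    intro n x y hx hy
    apply intervalIntegral.integral_congr
    intro t ht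
    have htI : t ∈ I := hI.uIcc_subset hx hy ht
    by_cases h : Pos n
    · simp only [hG', hG'', if_pos h]
    · simp only [hG', hG'', if_neg h, neg_div_neg_eq]
  rw [hmax_iff, key]
  constructor
  · intro h x hx y hy hxy
    have := h x hx y hy hxy
    rwa [tendsto_congr (fun n => hintEq n x y hx hy)] at this
  · intro h x hx y hy hxy
    have := h x hx y hy hxy
    rwa [tendsto_congr (fun n => hintEq n x y hx hy)]
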